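/- arXiv:1205.2205 — 2 statements merged into one kernel-verified Lean document; each statement's English description precedes it below -/
import Mathlib

section
/- For every finite forest F = (V, E) (a simple graph with no cycles) and all elements v, x, y of a field such that x + y is invertible, the subgraph counting polynomial is obtained from the subgraph component polynomial by the substitution H(F, v, x, y) = Q(F, v·(x + y), x·(x + y)⁻¹). -/
open Finset

/-- The edge set of a simple graph on a finite vertex type, as a `Finset`. -/
noncomputable def edgeFinset' {α : Type*} [Fintype α] (G : SimpleGraph α) :
    Finset (Sym2 α) :=
  (Set.toFinite G.edgeSet).toFinset

/-- The number of connected components of a graph. -/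
noncomputable def ncomp {α : Type*} (G : SimpleGraph α) : ℕ :=
  Nat.card G.ConnectedComponent

/-- The Potts model `Z(G, x, y) = Σ_{A ⊆ E} x^{c(V,A)} y^{|A|}`, where `c(V,A)` is the
number of connected components of the spanning subgraph `(V, A)`. -/
noncomputable def potts {α : Type*} [Fintype α] {R : Type*} [CommRing R]
    (G : SimpleGraph α) (x y : R) : R :=
  ∑ A ∈ (edgeFinset' G).powerset,
    x ^ ncomp (SimpleGraph.fromEdgeSet (A : Set (Sym2 α))) * y ^ A.card

/-- The subgraph counting polynomial
`H(G, v, x, y) = Σ_{(W,F), W ⊆ V, F ⊆ E(G[W])} v^{|W|} x^{c(W,F)} y^{|F|}`,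
where `c(W,F)` is the number of connected components of the graph `(W, F)`. -/
noncomputable def scp {α : Type*} [Fintype α] {R : Type*} [CommRing R]
    (G : SimpleGraph α) (v x y : R) : R :=
  ∑ W : Finset α, ∑ F ∈ (edgeFinset' (G.induce (W : Set α))).powerset,
    v ^ W.card * x ^ ncomp (SimpleGraph.fromEdgeSet (F : Set (Sym2 (W : Set α)))) * y ^ F.card

/-- The subgraph component polynomial `Q(G, v, x) = Σ_{W ⊆ V} v^{|W|} x^{k(G[W])}`. -/
noncomputable def subgraphCompPoly {α : Type*} [Fintype α] {R : Type*} [CommRing R]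
    (G : SimpleGraph α) (v x : R) : R :=
  ∑ W : Finset α, v ^ W.card * x ^ ncomp (G.induce (W : Set α))

/-- The number of bad monochromatic edges of a coloring `φ : α → Fin x` (colors `1, …, x`
identified with `Fin x` via `c ↦ c + 1`): edges all of whose vertices get the same color
`c ≤ y`, i.e. `(c : ℕ) < y`. -/
noncomputable def badCount {α : Type*} {x : ℕ} (G : SimpleGraph α) (y : ℕ)
    (φ : α → Fin x) : ℕ :=
  {e ∈ G.edgeSet | ∃ c : Fin x, (c : ℕ) < y ∧ ∀ w ∈ e, φ w = c}.ncard

/-- The number of monochromatic edges of a coloring `φ : α → Fin x`. -/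
noncomputable def monoCount {α : Type*} {x : ℕ} (G : SimpleGraph α)
    (φ : α → Fin x) : ℕ :=
  {e ∈ G.edgeSet | ∃ c : Fin x, ∀ w ∈ e, φ w = c}.ncard

/-- The bad coloring polynomial `χ̃(G, x, z) = Σ_{φ : V → {1,…,x}} z^{m(φ)}`, where `m(φ)`
is the number of monochromatic edges of `φ`. -/
noncomputable def badChrom {α : Type*} [Fintype α] [DecidableEq α] {R : Type*} [CommRing R]
    (G : SimpleGraph α) (x : ℕ) (z : R) : R :=
  ∑ φ : α → Fin x, z ^ monoCount G φ

/-- The trivariate chromatic polynomial `P̃(G, x, y, z) = Σ_{φ : V → {1,…,x}} z^{b(φ)}`,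
where `b(φ)` is the number of bad monochromatic edges of `φ` (monochromatic in a color
`c ≤ y`). -/
noncomputable def triChrom {α : Type*} [Fintype α] [DecidableEq α] {R : Type*} [CommRing R]
    (G : SimpleGraph α) (x y : ℕ) (z : R) : R :=
  ∑ φ : α → Fin x, z ^ badCount G y φ

/-- The subgraph counting polynomial as a polynomial with integer coefficients in the
variables `v = X 0`, `x = X 1`, `y = X 2`. -/
noncomputable def scpPoly {α : Type*} [Fintype α] (G : SimpleGraph α) :
    MvPolynomial (Fin 3) ℤ :=
  scp G (MvPolynomial.X 0) (MvPolynomial.X 1) (MvPolynomial.X 2)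

/-!
A forest with `n` vertices and `m` edges has `n - m` components, as each edge joins two
components. Every edge set `A ⊆ E(F[W])` spans a forest, so `c(W, A) = k(F[W]) + |E(F[W])| - |A|`
and the inner sum of `H` over `A` is binomial: `x ^ k(F[W]) * (x + y) ^ |E(F[W])|`. Substituting
`|E(F[W])| = |W| - k(F[W])` gives the `W`-term of `Q(F, v (x + y), x / (x + y))`.
-/

open SimpleGraph

section Forest

variable {α : Type*}

lemma ncomp_bot : ncomp (⊥ : SimpleGraph α) = Nat.card α :=
  (Nat.card_eq_of_bijective _
    ⟨fun _ _ h => reachable_bot.mp (ConnectedComponent.eq.mp h), fun c => c.exists_rep⟩).symm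

lemma SimpleGraph.Reachable.of_sup_edge {G : SimpleGraph α} {a b u w : α}
    (huw : (G ⊔ edge a b).Reachable u w) (hu : ¬G.Reachable u b) (hw : ¬G.Reachable w b) :
    G.Reachable u w := by
  by_cases hab : G.Adj a b
  · rwa [sup_edge_of_adj _ hab] at huw
  have hdel : (G ⊔ edge a b).deleteEdges {s(a, b)} = G := by simp [deleteEdges_sup, hab]
  classical
  obtain ⟨p⟩ := huw
  rw [← hdel] at hu hw ⊢
  exact reachable_deleteEdges_iff_exists_walk.mpr
    ⟨p.toPath, p.toPath.2.isTrail.not_mem_edges_of_not_reachable hu hw⟩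

lemma ncomp_sup_edge_add_one [Finite α] {G : SimpleGraph α} {a b : α} (h : ¬G.Reachable a b) :
    ncomp (G ⊔ edge a b) + 1 = ncomp G := by
  classical
  set G' := G ⊔ edge a b
  have hab : G'.Reachable a b := Adj.reachable <| by
    simp only [G', sup_adj, edge_adj]
    exact Or.inr ⟨by simp, fun h' => h (h' ▸ .rfl)⟩
  -- the component of `b` merges into that of `a`; all other components survive
  let f (c : {c : G.ConnectedComponent // c ≠ G.connectedComponentMk b}) :
      G'.ConnectedComponent :=
    c.1.map (.ofLE le_sup_left)
  have hf : f.Bijective := by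
    constructor
    · rintro ⟨c, hc⟩ ⟨d, hd⟩ hcd
      induction c using ConnectedComponent.ind
      induction d using ConnectedComponent.ind
      exact Subtype.ext <| ConnectedComponent.sound <|
        (ConnectedComponent.exact hcd).of_sup_edge (hc ∘ ConnectedComponent.sound)
          (hd ∘ ConnectedComponent.sound)
    · intro c
      induction c using ConnectedComponent.ind with | h u =>
      by_cases hu : G.Reachable u b
      · exact ⟨⟨G.connectedComponentMk a, fun h' => h (ConnectedComponent.exact h')⟩,
          ConnectedComponent.sound (hab.trans (hu.mono le_sup_left).symm)⟩
      · exact ⟨⟨G.connectedComponentMk u, fun h' => hu (ConnectedComponent.exact h')⟩, rfl⟩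
  rw [ncomp, ncomp, ← Nat.card_eq_of_bijective f hf, ← Finite.card_option,
    Nat.card_congr (Equiv.optionSubtypeNe _)]

lemma ncomp_fromEdgeSet_add_card_of_isAcyclic [Finite α] (s : Finset (Sym2 α))
    (hs : ∀ e ∈ s, ¬e.IsDiag) (h : (fromEdgeSet (s : Set (Sym2 α))).IsAcyclic) :
    ncomp (fromEdgeSet (s : Set (Sym2 α))) + #s = Nat.card α := by
  classical
  induction s using Finset.induction_on with
  | empty => simp [fromEdgeSet_empty, ncomp_bot]
  | insert e s he ih =>
    induction e using Sym2.ind with | h a b =>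
    have hab : a ≠ b := by simpa using hs _ (mem_insert_self _ _)
    have hsplit : fromEdgeSet ↑(insert s(a, b) s) = fromEdgeSet ↑s ⊔ edge a b := by
      rw [coe_insert, Set.insert_eq, fromEdgeSet_union, sup_comm, edge]
    rw [hsplit] at h ⊢
    obtain ⟨hacyc, hreach⟩ := isAcyclic_sup_fromEdgeSet_iff.mp h
    have hnr : ¬(fromEdgeSet ↑s).Reachable a b := fun r =>
      (hreach r).elim hab fun hadj => he ((fromEdgeSet_adj _).mp hadj).1
    rw [card_insert_of_notMem he, ← ih (fun e he => hs e (mem_insert_of_mem he)) hacyc,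
      ← ncomp_sup_edge_add_one hnr]
    omega

variable [Fintype α]

@[simp]
lemma mem_edgeFinset' {G : SimpleGraph α} {e : Sym2 α} :
    e ∈ edgeFinset' G ↔ e ∈ G.edgeSet :=
  Set.Finite.mem_toFinset _

@[simp]
lemma coe_edgeFinset' (G : SimpleGraph α) : (edgeFinset' G : Set (Sym2 α)) = G.edgeSet :=
  Set.Finite.coe_toFinset _

lemma ncomp_add_card_edgeFinset'_of_isAcyclic {G : SimpleGraph α} (hG : G.IsAcyclic) :
    ncomp G + #(edgeFinset' G) = Nat.card α := by
  simpa [fromEdgeSet_edgeSet] using ncomp_fromEdgeSet_add_card_of_isAcyclic (edgeFinset' G)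
    (fun e he => G.not_isDiag_of_mem_edgeSet (mem_edgeFinset'.mp he))
    (by simpa [fromEdgeSet_edgeSet])

lemma potts_eq_of_isAcyclic {R : Type*} [CommRing R] {G : SimpleGraph α} (hG : G.IsAcyclic)
    (x y : R) : potts G x y = x ^ ncomp G * (x + y) ^ #(edgeFinset' G) := by
  have hE := ncomp_add_card_edgeFinset'_of_isAcyclic hG
  set E := edgeFinset' G
  have hncomp (A : Finset (Sym2 α)) (hA : A ∈ E.powerset) :
      ncomp (fromEdgeSet (A : Set (Sym2 α))) = ncomp G + (#E - #A) := by
    have hAE : A ⊆ E := mem_powerset.mp hA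
    have hforest := ncomp_fromEdgeSet_add_card_of_isAcyclic A
      (fun e he => G.not_isDiag_of_mem_edgeSet (mem_edgeFinset'.mp (hAE he)))
      (hG.anti ((fromEdgeSet_le G).mpr fun e he => mem_edgeFinset'.mp (hAE he.1)))
    have := card_le_card hAE
    omega
  calc potts G x y = ∑ A ∈ E.powerset, x ^ ncomp G * (y ^ #A * x ^ (#E - #A)) :=
        sum_congr rfl fun A hA => by rw [hncomp A hA, pow_add]; ring
    _ = x ^ ncomp G * (x + y) ^ #E := by rw [← mul_sum, sum_pow_mul_eq_add_pow, add_comm y]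

lemma scp_eq_sum_potts {R : Type*} [CommRing R] (G : SimpleGraph α) (v x y : R) :
    scp G v x y = ∑ W : Finset α, v ^ #W * potts (G.induce (W : Set α)) x y := by
  simp only [scp, potts, mul_sum, mul_assoc]

end Forest

/-- For a forest `F` and field elements with `x + y` invertible,
`H(F, v, x, y) = Q(F, v·(x + y), x·(x + y)⁻¹)`. -/
theorem scp_eq_subgraphCompPoly_of_isAcyclic {V : Type*} [Fintype V] {K : Type*}
    [Field K] (F : SimpleGraph V) (hF : F.IsAcyclic) (v x y : K) (h : x + y ≠ 0) :
    scp F v x y = subgraphCompPoly F (v * (x + y)) (x * (x + y)⁻¹) := by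
  rw [scp_eq_sum_potts, subgraphCompPoly]
  refine sum_congr rfl fun W _ => ?_
  have hn := ncomp_add_card_edgeFinset'_of_isAcyclic (hF.induce (W : Set V))
  rw [Nat.card_coe_set_eq, Set.ncard_coe_finset] at hn
  rw [potts_eq_of_isAcyclic (hF.induce _), mul_pow, mul_pow, inv_pow, ← hn, pow_add (x + y)]
  field_simp
end

section
/- The trivariate chromatic polynomial encodes the degree sequence: if G¹ = (V¹, E¹) and G² = (V², E²) are finite simple graphs such that P̃(G¹, x, y, z) = P̃(G², x, y, z) for all natural numbers x, y with y ≤ x and all integers z, then for every natural number i the number of vertices of degree i in G¹ equals the number of vertices of degree i in G². -/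
open Finset

/-!
Take `y = 1` and `x = t + 1`, so that only colour `0` is bad. Grouping colourings by the set `W`
of vertices coloured `0` gives `P̃(G, t + 1, 1, z) = Σ_W t ^ (n - |W|) z ^ e(G[W])`, a polynomial
in `t`. Its constant coefficient is `z ^ |E|` and its linear coefficient is
`Σ_v z ^ e(G - v) = Σ_v z ^ (|E| - deg v)`; as functions of `z` these determine `|E|` and the
multiset of degrees.
-/

open Polynomial

lemma Polynomial.eq_of_eval_natCast_eq {R : Type*} [CommRing R] [IsDomain R] [CharZero R]
    {p q : R[X]} (h : ∀ n : ℕ, p.eval (n : R) = q.eval (n : R)) : p = q :=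
  eq_of_infinite_eval_eq p q <| (Set.infinite_range_of_injective Nat.cast_injective).mono <| by
    rintro _ ⟨n, rfl⟩
    exact h n

lemma map_univ_eq_of_sum_pow_eq {ι κ : Type*} [Fintype ι] [Fintype κ] {f : ι → ℕ} {g : κ → ℕ}
    (h : ∀ z : ℤ, ∑ i, z ^ f i = ∑ j, z ^ g j) : univ.val.map f = univ.val.map g := by
  have hpoly : ∑ i, (X : ℤ[X]) ^ f i = ∑ j, X ^ g j :=
    Polynomial.funext fun z => by simpa only [eval_finsetSum, eval_pow, eval_X] using h z
  ext k
  have hk := congrArg (coeff · k) hpoly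
  simp only [finsetSum_coeff, coeff_X_pow, sum_boole] at hk
  simpa only [Multiset.count_map, ← filter_val, card_val, Nat.cast_inj] using hk

noncomputable def inducedEdgeCount {α : Type*} (G : SimpleGraph α) (W : Finset α) : ℕ :=
  {e ∈ G.edgeSet | ∀ w ∈ e, w ∈ W}.ncard

section InducedEdgeCount

variable {α : Type*} [Fintype α] (G : SimpleGraph α) [DecidableRel G.Adj]

lemma inducedEdgeCount_univ : inducedEdgeCount G univ = #G.edgeFinset := by
  simp [inducedEdgeCount, ← Set.ncard_coe_finset]

lemma inducedEdgeCount_erase_add_degree [DecidableEq α] (v : α) :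
    inducedEdgeCount G (univ.erase v) + G.degree v = #G.edgeFinset := by
  have hsplit : {e ∈ G.edgeSet | ∀ w ∈ e, w ∈ univ.erase v} = G.edgeSet \ G.incidenceSet v := by
    ext e
    simp only [Set.mem_ofPred_eq, Set.mem_sdiff, SimpleGraph.incidenceSet, mem_erase, mem_univ,
      and_true]
    exact and_congr_right fun he => ⟨fun hall hv => hall v hv.2 rfl,
      fun hv w hw hwv => hv ⟨he, hwv ▸ hw⟩⟩
  rw [inducedEdgeCount, hsplit, Set.ncard_sdiff (G.incidenceSet_subset v),
    ← SimpleGraph.card_incidenceFinset_eq_degree, ← Set.ncard_coe_finset,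
    SimpleGraph.coe_incidenceFinset, ← Set.ncard_coe_finset, SimpleGraph.coe_edgeFinset,
    Nat.sub_add_cancel (Set.ncard_le_ncard (G.incidenceSet_subset v))]

lemma filter_degree_eq_filter_inducedEdgeCount_erase [DecidableEq α] (i : ℕ) :
    univ.filter (fun u => G.degree u = i)
      = univ.filter fun v => inducedEdgeCount G (univ.erase v) + i = #G.edgeFinset :=
  filter_congr fun v _ => by
    have := inducedEdgeCount_erase_add_degree G v
    omega

end InducedEdgeCount

lemma badCount_one {α : Type*} {t : ℕ} (G : SimpleGraph α) [Fintype α]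
    (φ : α → Fin (t + 1)) : badCount G 1 φ = inducedEdgeCount G {v | φ v = 0} := by
  unfold badCount inducedEdgeCount
  congr 1
  ext e
  simp only [Set.mem_ofPred_eq, mem_filter, mem_univ, true_and, Nat.lt_one_iff,
    Fin.val_eq_zero_iff, exists_eq_left]

lemma card_filter_preimage_zero_eq {α : Type*} [Fintype α] [DecidableEq α] (t : ℕ)
    (W : Finset α) :
    #{φ : α → Fin (t + 1) | ({v | φ v = 0} : Finset α) = W} = t ^ (Fintype.card α - #W) := by
  have hpi : ({φ : α → Fin (t + 1) | ({v | φ v = 0} : Finset α) = W} : Finset _)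
      = Fintype.piFinset fun v => if v ∈ W then {0} else {0}ᶜ := by
    ext φ
    simp only [mem_filter, mem_univ, true_and, Fintype.mem_piFinset, Finset.ext_iff]
    refine forall_congr' fun v => ?_
    split_ifs <;> simp_all
  rw [hpi, Fintype.card_piFinset]
  simp_rw [apply_ite card, card_singleton, card_compl, card_singleton, Fintype.card_fin,
    Nat.add_sub_cancel]
  rw [prod_ite, prod_const_one, one_mul, prod_const, filter_not,
    card_sdiff_of_subset (filter_subset _ _), filter_mem_eq_inter, univ_inter, card_univ]

lemma triChrom_succ_one {α : Type*} [Fintype α] [DecidableEq α] (G : SimpleGraph α) (t : ℕ)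
    (z : ℤ) :
    triChrom G (t + 1) 1 z
      = ∑ W : Finset α, (t : ℤ) ^ (Fintype.card α - #W) * z ^ inducedEdgeCount G W := by
  rw [triChrom, ← sum_fiberwise univ (fun φ : α → Fin (t + 1) => ({v | φ v = 0} : Finset α))]
  refine sum_congr rfl fun W _ => ?_
  rw [sum_congr rfl fun φ hφ => by rw [badCount_one, (mem_filter.1 hφ).2], sum_const,
    card_filter_preimage_zero_eq, nsmul_eq_mul]
  push_cast
  rfl

noncomputable def triChromOnePoly {α : Type*} [Fintype α] (G : SimpleGraph α) (z : ℤ) : ℤ[X] :=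
  ∑ W : Finset α, C (z ^ inducedEdgeCount G W) * X ^ (Fintype.card α - #W)

section TriChromOnePoly

variable {α : Type*} [Fintype α] (G : SimpleGraph α) (z : ℤ)

lemma eval_triChromOnePoly [DecidableEq α] (t : ℕ) :
    (triChromOnePoly G z).eval (t : ℤ) = triChrom G (t + 1) 1 z := by
  simp only [triChromOnePoly, triChrom_succ_one, eval_finsetSum, eval_mul, eval_C, eval_pow,
    eval_X, mul_comm]

lemma coeff_triChromOnePoly (k : ℕ) :
    (triChromOnePoly G z).coeff k
      = ∑ W : Finset α with Fintype.card α - #W = k, z ^ inducedEdgeCount G W := by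
  simp only [triChromOnePoly, finsetSum_coeff, coeff_C_mul, coeff_X_pow, mul_ite, mul_one,
    mul_zero, sum_ite, sum_const_zero, add_zero, eq_comm]

lemma coeff_zero_triChromOnePoly [DecidableRel G.Adj] :
    (triChromOnePoly G z).coeff 0 = z ^ #G.edgeFinset := by
  have huniv : ({W : Finset α | Fintype.card α - #W = 0} : Finset _) = {univ} := by
    ext W
    simp [Nat.sub_eq_zero_iff_le, ← card_eq_iff_eq_univ, (card_le_univ W).ge_iff_eq]
  rw [coeff_triChromOnePoly, huniv, sum_singleton, inducedEdgeCount_univ]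

lemma coeff_one_triChromOnePoly [DecidableEq α] :
    (triChromOnePoly G z).coeff 1 = ∑ v, z ^ inducedEdgeCount G (univ.erase v) := by
  rw [coeff_triChromOnePoly]
  symm
  refine sum_bij (fun v _ => univ.erase v) (fun v _ => ?_)
    (fun v _ w _ => (erase_inj univ (mem_univ v)).1) (fun W hW => ?_) fun _ _ => rfl
  · have : 0 < Fintype.card α := Fintype.card_pos_iff.2 ⟨v⟩
    simp only [mem_filter, mem_univ, card_erase_of_mem, card_univ, true_and]
    omega
  · have hcompl : #Wᶜ = 1 := by
      rw [card_compl]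
      exact (mem_filter.1 hW).2
    obtain ⟨v, hv⟩ := card_eq_one.1 hcompl
    exact ⟨v, mem_univ v, by rw [← compl_singleton, ← hv, compl_compl]⟩

end TriChromOnePoly

/-- The trivariate chromatic polynomial encodes the degree sequence. -/
theorem triChrom_encodes_degreeSequence {V₁ V₂ : Type*} [Fintype V₁] [DecidableEq V₁]
    [Fintype V₂] [DecidableEq V₂] (G₁ : SimpleGraph V₁) (G₂ : SimpleGraph V₂)
    [DecidableRel G₁.Adj] [DecidableRel G₂.Adj]
    (h : ∀ x y : ℕ, y ≤ x → ∀ z : ℤ, triChrom G₁ x y z = triChrom G₂ x y z) (i : ℕ) :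
    (Finset.univ.filter fun u : V₁ => G₁.degree u = i).card
      = (Finset.univ.filter fun u : V₂ => G₂.degree u = i).card := by
  have hpoly (z : ℤ) : triChromOnePoly G₁ z = triChromOnePoly G₂ z :=
    Polynomial.eq_of_eval_natCast_eq fun t => by
      rw [eval_triChromOnePoly, eval_triChromOnePoly, h _ _ (by omega)]
  have hedges : #G₁.edgeFinset = #G₂.edgeFinset := by
    have h2 := congrArg (coeff · 0) (hpoly 2)
    simp only [coeff_zero_triChromOnePoly] at h2
    exact Nat.pow_right_injective le_rfl (by exact_mod_cast h2)
  have hmap : univ.val.map (fun v => inducedEdgeCount G₁ (univ.erase v))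
      = univ.val.map (fun v => inducedEdgeCount G₂ (univ.erase v)) :=
    map_univ_eq_of_sum_pow_eq fun z => by
      rw [← coeff_one_triChromOnePoly, ← coeff_one_triChromOnePoly, hpoly]
  have hcount := congrArg (Multiset.countP (· + i = #G₁.edgeFinset)) hmap
  simp only [Multiset.countP_map, ← filter_val, card_val] at hcount
  rw [filter_degree_eq_filter_inducedEdgeCount_erase,
    filter_degree_eq_filter_inducedEdgeCount_erase, ← hedges, hcount]
end
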